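/- The set of all f ∈ A(D) such that the 2π-periodic complex-valued function h(θ) = f(e^{iθ}) is differentiable at no point θ ∈ ℝ is residual in A(D), i.e. it contains a subset that is a countable intersection of open sets and is dense in A(D). -/

import Mathlib

open Complex Metric Set Filter

/-- The disc algebra `A(D)`: continuous functions on the closed unit disc that admit an
extension which is holomorphic on the open unit disc. -/
noncomputable def discAlgebra : Set C(Metric.closedBall (0:ℂ) 1, ℂ) :=
  {f | ∃ F : ℂ → ℂ, (∀ z : Metric.closedBall (0:ℂ) 1, F z = f z) ∧
       DifferentiableOn ℂ F (Metric.ball 0 1)}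

/-- The boundary point `e^{iθ}` of the closed unit disc. -/
noncomputable def bdry (θ : ℝ) : Metric.closedBall (0:ℂ) 1 :=
  ⟨Complex.exp (θ * Complex.I), by
    simp [Metric.mem_closedBall, Complex.dist_eq, Complex.norm_exp]⟩

instance : CompactSpace ↥(Metric.closedBall (0:ℂ) 1) :=
  isCompact_iff_compactSpace.mp (isCompact_closedBall _ _)

instance : CompactSpace ↥(Icc (0:ℝ) (2*Real.pi)) :=
  isCompact_iff_compactSpace.mp isCompact_Icc

lemma lip_exp : LipschitzWith 1 (fun θ : ℝ => Complex.exp (θ * Complex.I)) := by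
  have hd : ∀ θ : ℝ, HasDerivAt (fun θ : ℝ => Complex.exp (θ * Complex.I))
      (Complex.I * Complex.exp (θ * Complex.I)) θ := by
    intro θ
    have h1 : HasDerivAt (fun θ : ℝ => (θ : ℂ) * Complex.I) Complex.I θ := by
      simpa using (Complex.ofRealCLM.hasDerivAt (x := θ)).mul_const Complex.I
    simpa [mul_comm] using h1.cexp
  apply lipschitzWith_of_nnnorm_deriv_le (fun θ => (hd θ).differentiableAt)
  intro θ
  rw [(hd θ).deriv]
  simp [← NNReal.coe_le_coe, Complex.norm_exp]

lemma bdry_lip : LipschitzWith 1 bdry := by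
  intro a b
  simpa [bdry, edist_dist, Subtype.dist_eq, Complex.dist_eq] using lip_exp a b

lemma continuous_bdry : Continuous bdry := bdry_lip.continuous

open Classical in
/-- Extension of a continuous map on the closed disc to all of `ℂ` (by zero outside). -/
noncomputable def extend' (f : C(Metric.closedBall (0:ℂ) 1, ℂ)) : ℂ → ℂ :=
  fun z => if hz : z ∈ Metric.closedBall (0:ℂ) 1 then f ⟨z, hz⟩ else 0

lemma isClosed_discAlgebra : IsClosed discAlgebra := by
  rw [← isSeqClosed_iff_isClosed]
  intro F f hF hlim
  refine ⟨extend' f, fun z => by simp [extend', z.2], ?_⟩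
  have hball : Metric.ball (0:ℂ) 1 ⊆ Metric.closedBall 0 1 := ball_subset_closedBall
  have htu : TendstoUniformlyOn (fun k => extend' (F k)) (extend' f) atTop (Metric.ball (0:ℂ) 1) := by
    rw [Metric.tendstoUniformlyOn_iff]
    intro ε hε
    have : ∀ᶠ k in atTop, dist (F k) f < ε :=
      (Metric.tendsto_nhds.mp hlim) ε hε
    filter_upwards [this] with k hk z hz
    have hz' := hball hz
    have : dist (F k ⟨z, hz'⟩) (f ⟨z, hz'⟩) ≤ dist (F k) f :=
      ContinuousMap.dist_apply_le_dist _
    simp only [extend', dif_pos hz']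
    calc dist (f ⟨z, hz'⟩) (F k ⟨z, hz'⟩) ≤ dist (F k) f := by rwa [dist_comm]
      _ < ε := hk
  refine htu.tendstoLocallyUniformlyOn.differentiableOn ?_ isOpen_ball
  filter_upwards with k
  obtain ⟨G, hG, hGd⟩ := hF k
  refine hGd.congr fun z hz => ?_
  simp only [extend', dif_pos (hball hz)]
  exact (hG ⟨z, hball hz⟩).symm

/-- The set of `f` whose boundary function has difference quotients bounded by `n`
at some point of `[0, 2π]`. -/
noncomputable def En (n : ℕ) : Set ↥discAlgebra :=
  {f | ∃ θ ∈ Icc (0:ℝ) (2*Real.pi),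
    ∀ y : ℝ, ‖f.1 (bdry y) - f.1 (bdry θ)‖ ≤ n * |y - θ|}

lemma isClosed_En (n : ℕ) : IsClosed (En n) := by
  have heval : Continuous fun q : C(Metric.closedBall (0:ℂ) 1, ℂ) × ↥(Metric.closedBall (0:ℂ) 1) => q.1 q.2 :=
    ContinuousEval.continuous_eval
  set C : Set (↥discAlgebra × ↥(Icc (0:ℝ) (2*Real.pi))) :=
    {p | ∀ y : ℝ, ‖p.1.1 (bdry y) - p.1.1 (bdry p.2.1)‖ ≤ n * |y - p.2.1|} with hCdef
  have hc1 : Continuous fun p : ↥discAlgebra × ↥(Icc (0:ℝ) (2*Real.pi)) =>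
      (p.1.1 : C(Metric.closedBall (0:ℂ) 1, ℂ)) := continuous_subtype_val.comp continuous_fst
  have hc2 : Continuous fun p : ↥discAlgebra × ↥(Icc (0:ℝ) (2*Real.pi)) => (p.2.1 : ℝ) :=
    continuous_subtype_val.comp continuous_snd
  have hCclosed : IsClosed C := by
    have : C = ⋂ y : ℝ, {p : ↥discAlgebra × ↥(Icc (0:ℝ) (2*Real.pi)) |
        ‖p.1.1 (bdry y) - p.1.1 (bdry p.2.1)‖ ≤ n * |y - p.2.1|} := by
      ext p; simp [hCdef]
    rw [this]
    refine isClosed_iInter fun y => isClosed_le ?_ ?_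
    · exact ((heval.comp (hc1.prodMk continuous_const)).sub
        (heval.comp (hc1.prodMk (continuous_bdry.comp hc2)))).norm
    · exact continuous_const.mul ((continuous_const.sub hc2).abs)
  have himg : En n = Prod.fst '' C := by
    ext f
    constructor
    · rintro ⟨θ, hθ, hy⟩; exact ⟨(f, ⟨θ, hθ⟩), hy, rfl⟩
    · rintro ⟨⟨g, θ⟩, hp, rfl⟩; exact ⟨θ.1, θ.2, hp⟩
  rw [himg]
  exact isClosedMap_fst_of_compactSpace _ hCclosed

lemma dense_compl_En (n : ℕ) : Dense (En n)ᶜ := by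
  rw [Metric.dense_iff]
  intro f ε hε
  set δ : ℝ := ε/2 with hδdef
  have hδ : 0 < δ := by positivity
  have huc : UniformContinuous fun θ : ℝ => f.1 (bdry θ) :=
    (CompactSpace.uniformContinuous_of_continuous f.1.continuous).comp
      bdry_lip.uniformContinuous
  obtain ⟨η, hη, hucη⟩ := Metric.uniformContinuous_iff.mp huc (δ/2) (by positivity)
  set N : ℕ := ⌈max (Real.pi/η) (n*Real.pi/δ)⌉₊ + 1 with hNdef
  have hN0 : 0 < (N:ℝ) := by positivity
  have hπN : Real.pi / N < η := by
    rw [div_lt_iff₀ hN0] at *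
    have h1 : Real.pi/η ≤ ⌈max (Real.pi/η) (n*Real.pi/δ)⌉₊ :=
      le_trans (le_max_left _ _) (Nat.le_ceil _)
    have : Real.pi/η < N := by
      refine lt_of_le_of_lt h1 ?_; exact_mod_cast Nat.lt_succ_self _
    calc Real.pi = (Real.pi/η) * η := by field_simp
      _ < N * η := by exact mul_lt_mul_of_pos_right this hη
      _ = η * N := mul_comm _ _
  have hnπN : (n:ℝ) * (Real.pi / N) < δ := by
    have h1 : n*Real.pi/δ < N :=
      lt_of_le_of_lt (le_trans (le_max_right _ _) (Nat.le_ceil _))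
        (by exact_mod_cast Nat.lt_succ_self _)
    rw [div_lt_iff₀ hδ] at h1
    calc (n:ℝ) * (Real.pi / N) = (n*Real.pi)/N := by ring
      _ < δ := by
        rw [div_lt_iff₀ hN0]
        nlinarith [h1]
  set P : C(Metric.closedBall (0:ℂ) 1, ℂ) :=
    ⟨fun z => (δ:ℂ) * (z:ℂ)^N, by fun_prop⟩ with hPdef
  set gmap : C(Metric.closedBall (0:ℂ) 1, ℂ) := f.1 + P with hgdef
  have hgmem : gmap ∈ discAlgebra := by
    obtain ⟨F, hF, hFd⟩ := f.2
    refine ⟨fun z => F z + (δ:ℂ) * z^N, fun z => by simp [hgdef, hPdef, hF z], ?_⟩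
    exact hFd.add ((differentiable_const _).mul (differentiable_pow N)).differentiableOn
  set g : ↥discAlgebra := ⟨gmap, hgmem⟩ with hgdef2
  refine ⟨g, ?_, ?_⟩
  · rw [mem_ball, Subtype.dist_eq, ContinuousMap.dist_lt_iff hε]
    intro z
    have hz : ‖(z:ℂ)‖ ≤ 1 := by
      have := z.2; rwa [Metric.mem_closedBall, Complex.dist_eq, sub_zero] at this
    have h1 : gmap z - f.1 z = (δ:ℂ) * (z:ℂ)^N := by
      simp [hgdef, hPdef]
    rw [dist_eq_norm, h1]
    calc ‖(δ:ℂ) * (z:ℂ)^N‖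
        = δ * ‖(z:ℂ)‖^N := by
          rw [norm_mul, norm_pow]
          simp [abs_of_pos hδ]
      _ ≤ δ * 1 :=
          mul_le_mul_of_nonneg_left (pow_le_one₀ (norm_nonneg _) hz) hδ.le
      _ < ε := by rw [mul_one]; linarith
  · rintro ⟨θ, hθI, hy⟩
    have hyθ := hy (θ + Real.pi / N)
    have hP1 : ∀ x : ℝ, (((bdry x : ↥(Metric.closedBall (0:ℂ) 1)) : ℂ))^N
        = Complex.exp ((N * x : ℝ) * Complex.I) := by
      intro x
      rw [bdry]
      rw [← Complex.exp_nat_mul]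
      push_cast; ring_nf
    have hkey : Complex.exp (((N:ℝ) * (θ + Real.pi/N) : ℝ) * Complex.I)
        = - Complex.exp (((N:ℝ) * θ : ℝ) * Complex.I) := by
      have hNne : (N:ℝ) ≠ 0 := ne_of_gt hN0
      have : ((N:ℝ) * (θ + Real.pi/N) : ℝ) = (N:ℝ)*θ + Real.pi := by field_simp
      rw [this]
      push_cast
      rw [add_mul, Complex.exp_add, Complex.exp_pi_mul_I]
      ring
    have hA : ‖f.1 (bdry (θ + Real.pi/N)) - f.1 (bdry θ)‖ < δ/2 := by
      have : dist (θ + Real.pi/N) θ < η := by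
        rw [Real.dist_eq, add_sub_cancel_left, abs_of_pos (by positivity)]
        exact hπN
      have := hucη this
      rwa [dist_eq_norm] at this
    have hval : gmap (bdry (θ + Real.pi/N)) - gmap (bdry θ)
        = (f.1 (bdry (θ + Real.pi/N)) - f.1 (bdry θ))
          - (2*δ : ℝ) * Complex.exp (((N:ℝ)*θ : ℝ) * Complex.I) := by
      simp only [hgdef, hPdef, ContinuousMap.add_apply, ContinuousMap.coe_mk]
      rw [hP1, hP1, hkey]
      push_cast; ring
    have hnorm : ‖gmap (bdry (θ + Real.pi/N)) - gmap (bdry θ)‖ > 3*δ/2 := by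
      rw [hval]
      have h2 : ‖(2*δ : ℝ) * Complex.exp (((N:ℝ)*θ : ℝ) * Complex.I)‖ = 2*δ := by
        rw [norm_mul, Complex.norm_exp]
        push_cast
        simp [abs_of_pos hδ, abs_of_pos (by positivity : (0:ℝ) < 2*δ)]
      calc ‖(f.1 (bdry (θ + Real.pi/N)) - f.1 (bdry θ))
          - (2*δ:ℝ) * Complex.exp (((N:ℝ)*θ:ℝ) * Complex.I)‖
          ≥ ‖(2*δ:ℝ) * Complex.exp (((N:ℝ)*θ:ℝ) * Complex.I)‖
            - ‖f.1 (bdry (θ + Real.pi/N)) - f.1 (bdry θ)‖ := by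
            rw [norm_sub_rev]; exact norm_sub_norm_le _ _
        _ > 2*δ - δ/2 := by rw [h2]; linarith
        _ = 3*δ/2 := by ring
    have hrhs : (n:ℝ) * |(θ + Real.pi/N) - θ| < δ := by
      rw [add_sub_cancel_left, abs_of_pos (by positivity)]
      exact hnπN
    have : ‖g.1 (bdry (θ + Real.pi/N)) - g.1 (bdry θ)‖ > (n:ℝ) * |(θ + Real.pi/N) - θ| := by
      calc (n:ℝ) * |(θ + Real.pi/N) - θ| < δ := hrhs
        _ < 3*δ/2 := by linarith
        _ < ‖gmap (bdry (θ + Real.pi/N)) - gmap (bdry θ)‖ := hnorm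
    exact absurd hyθ (not_le.mpr this)

lemma bdry_periodic : Function.Periodic (fun x : ℝ => bdry x) (2*Real.pi) := by
  intro x
  apply Subtype.ext
  show Complex.exp (((x + 2*Real.pi : ℝ) : ℂ) * Complex.I) = Complex.exp ((x:ℝ) * Complex.I)
  push_cast
  rw [add_mul, Complex.exp_add, Complex.exp_two_pi_mul_I, mul_one]

/-- The set of `f ∈ A(D)` such that the `2π`-periodic complex-valued function
`θ ↦ f(e^{iθ})` is differentiable at no point `θ ∈ ℝ` is residual in `A(D)`:
it contains a `Gδ` dense subset. -/
theorem residual_nowhere_differentiable_boundary :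
    ∃ S : Set discAlgebra,
      S ⊆ {f : discAlgebra | ∀ θ : ℝ,
            ¬ DifferentiableAt ℝ (fun x : ℝ => f.1 (bdry x)) θ} ∧
      IsGδ S ∧ Dense S := by
  haveI : CompleteSpace ↥discAlgebra := isClosed_discAlgebra.completeSpace_coe
  refine ⟨⋂ n, (En n)ᶜ, ?_, ?_, ?_⟩
  · intro f hf θ hdiff
    set h : ℝ → ℂ := fun x => f.1 (bdry x) with hhdef
    have hper : Function.Periodic h (2*Real.pi) := fun x => by
      simp only [hhdef, bdry_periodic x]
    set k : ℤ := ⌊θ / (2*Real.pi)⌋ with hkdef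
    set θ' : ℝ := θ - k * (2*Real.pi) with hθ'def
    have h2π : 0 < 2*Real.pi := by positivity
    have hθ'Icc : θ' ∈ Icc (0:ℝ) (2*Real.pi) := by
      constructor
      · have := Int.sub_floor_div_mul_nonneg θ h2π
        simpa [hθ'def, hkdef] using this
      · have := Int.sub_floor_div_mul_lt θ h2π
        simp only [hθ'def, hkdef]
        linarith [this]
    have hθeq : θ' + k * (2*Real.pi) = θ := by rw [hθ'def]; ring
    have hdiff' : DifferentiableAt ℝ h θ' := by
      have h1 : DifferentiableAt ℝ (fun x : ℝ => h (x + k * (2*Real.pi))) θ' := by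
        have h2 : DifferentiableAt ℝ h (θ' + k * (2*Real.pi)) := by rwa [hθeq]
        exact DifferentiableAt.comp (g := h) θ' h2 (differentiableAt_id.add_const _)
      have h3 : (fun x : ℝ => h (x + k * (2*Real.pi))) = h := by
        funext x
        exact hper.int_mul k x
      rwa [h3] at h1
    obtain ⟨c, hc0, hc⟩ := hdiff'.isBigO_sub.exists_pos
    obtain ⟨r, hr0, hrb⟩ := Metric.eventually_nhds_iff.mp hc.bound
    set M : ℝ := ‖f.1‖ with hMdef
    set n : ℕ := ⌈max c (4*M/r)⌉₊ with hndef
    have hcn : c ≤ (n:ℝ) := le_trans (le_max_left _ _) (Nat.le_ceil _)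
    have hMn : 4*M/r ≤ (n:ℝ) := le_trans (le_max_right _ _) (Nat.le_ceil _)
    have hMem : f ∈ En n := by
      refine ⟨θ', hθ'Icc, fun y => ?_⟩
      by_cases hcase : |y - θ'| < r/2
      · have hd : dist y θ' < r := by
          rw [Real.dist_eq]; linarith [abs_nonneg (y - θ')]
        have := hrb hd
        calc ‖h y - h θ'‖ ≤ c * ‖y - θ'‖ := this
          _ ≤ n * |y - θ'| := by
            rw [Real.norm_eq_abs]
            exact mul_le_mul_of_nonneg_right hcn (abs_nonneg _)
      · push_neg at hcase
        have hb : ‖h y - h θ'‖ ≤ 2*M := by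
          calc ‖h y - h θ'‖ ≤ ‖h y‖ + ‖h θ'‖ := norm_sub_le _ _
            _ ≤ M + M := add_le_add (f.1.norm_coe_le_norm _) (f.1.norm_coe_le_norm _)
            _ = 2*M := by ring
        have hM0 : 0 ≤ M := norm_nonneg _
        calc ‖h y - h θ'‖ ≤ 2*M := hb
          _ = (4*M/r) * (r/2) := by field_simp; ring
          _ ≤ (n:ℝ) * (r/2) := mul_le_mul_of_nonneg_right hMn (by positivity)
          _ ≤ (n:ℝ) * |y - θ'| := mul_le_mul_of_nonneg_left hcase (by positivity)
    exact (mem_iInter.mp hf n) hMem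
  · exact IsGδ.iInter fun n => (isClosed_En n).isOpen_compl.isGδ
  · exact dense_iInter_of_isOpen (fun n => (isClosed_En n).isOpen_compl)
      (fun n => dense_compl_En n)
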